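/- arXiv:2405.17273 — 5 statements merged into one kernel-verified Lean document; each statement's English description precedes it below -/
import Mathlib

section
/- Let F : ℝ × ℝ → ℝ be a smooth function that vanishes on the diagonal (F(x,x) = 0 for all x) and satisfies ∂_y F(x,y)|_{y=x} = f(x) for all x ∈ [0,1], where f : ℝ → ℝ is continuous. Then for any sequence of partitions 0 = x_0 ≤ x_1 ≤ … ≤ x_n = 1 of [0,1] whose mesh max_i (x_{i+1} − x_i) tends to 0, the generalized Riemann sums ∑_{i=0}^{n−1} F(x_i, x_{i+1}) converge to ∫_0^1 f(x) dx. -/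
open Filter Finset

/-- Generalized Riemann sums `∑ F(x_i, x_{i+1})` associated to a smooth two-point
function `F` vanishing on the diagonal with `∂_y F(x,y)|_{y=x} = f(x)` converge to
`∫_0^1 f` along any sequence of partitions of `[0,1]` with mesh tending to `0`. -/
theorem generalized_riemann_sum_tendsto_integral
    (F : ℝ × ℝ → ℝ) (f : ℝ → ℝ)
    (hF : ContDiff ℝ (⊤ : ℕ∞) F)
    (hf : Continuous f)
    (hdiag : ∀ x : ℝ, F (x, x) = 0)
    (hder : ∀ x ∈ Set.Icc (0 : ℝ) 1, deriv (fun y => F (x, y)) x = f x)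
    (k : ℕ → ℕ) (x : ℕ → ℕ → ℝ)
    (hx0 : ∀ n, x n 0 = 0)
    (hx1 : ∀ n, x n (k n) = 1)
    (hmono : ∀ n, ∀ i < k n, x n i ≤ x n (i + 1))
    (hmesh : ∀ ε > 0, ∃ N, ∀ n ≥ N, ∀ i < k n, x n (i + 1) - x n i < ε) :
    Tendsto (fun n => ∑ i ∈ Finset.range (k n), F (x n i, x n (i + 1)))
      atTop (nhds (∫ t in (0:ℝ)..1, f t)) := by
  have hdiffble := hF.differentiable (by simp)
  set G : ℝ × ℝ → ℝ := fun p => fderiv ℝ F p (0, 1) with hGdef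
  have hGcont : Continuous G :=
    (hF.continuous_fderiv (by simp)).clm_apply continuous_const
  have hderivAt : ∀ a b : ℝ, HasDerivAt (fun y => F (a, y)) (G (a, b)) b := by
    intro a b
    have h1 : HasDerivAt (fun y : ℝ => ((a, y) : ℝ × ℝ)) ((0 : ℝ), (1 : ℝ)) b :=
      HasDerivAt.prodMk (hasDerivAt_const b a) (hasDerivAt_id b)
    exact (hdiffble (a, b)).hasFDerivAt.comp_hasDerivAt b h1
  have hFeq : ∀ a b : ℝ, F (a, b) = ∫ t in a..b, G (a, t) := by
    intro a b
    have h2 : ∫ t in a..b, G (a, t) = F (a, b) - F (a, a) :=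
      intervalIntegral.integral_eq_sub_of_hasDerivAt (fun t _ => hderivAt a t)
        ((hGcont.comp (continuous_const.prodMk continuous_id)).intervalIntegrable a b)
    rw [h2, hdiag, sub_zero]
  have hGt : ∀ t ∈ Set.Icc (0:ℝ) 1, G (t, t) = f t := by
    intro t ht
    rw [← hder t ht, (hderivAt t t).deriv]
  set H : ℝ × ℝ → ℝ := fun p => G p - f p.2 with hHdef
  have hHcont : Continuous H := hGcont.sub (hf.comp continuous_snd)
  have hK : IsCompact (Set.Icc (0:ℝ) 1 ×ˢ Set.Icc (0:ℝ) 1) := isCompact_Icc.prod isCompact_Icc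
  have hHuc : UniformContinuousOn H (Set.Icc (0:ℝ) 1 ×ˢ Set.Icc (0:ℝ) 1) :=
    hK.uniformContinuousOn_of_continuous hHcont.continuousOn
  have hmono' : ∀ n, ∀ i j, i ≤ j → j ≤ k n → x n i ≤ x n j := by
    intro n i j hij hjk
    induction j with
    | zero => rw [Nat.le_zero.mp hij]
    | succ m ih =>
      rcases Nat.lt_or_ge i (m+1) with h | h
      · exact le_trans (ih (Nat.lt_succ_iff.mp h) (le_trans (Nat.le_succ m) hjk))
          (hmono n m (Nat.lt_of_succ_le hjk))
      · have : i = m + 1 := le_antisymm hij h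
        rw [this]
  rw [Metric.tendsto_atTop]
  intro ε hε
  obtain ⟨δ, hδ, hδ2⟩ := Metric.uniformContinuousOn_iff.mp hHuc (ε/2) (by positivity)
  obtain ⟨N, hN⟩ := hmesh δ hδ
  refine ⟨N, fun n hn => ?_⟩
  have hNn := hN n hn
  have hpt : ∀ i ≤ k n, x n i ∈ Set.Icc (0:ℝ) 1 := by
    intro i hik
    constructor
    · rw [← hx0 n]; exact hmono' n 0 i (Nat.zero_le i) hik
    · rw [← hx1 n]; exact hmono' n i (k n) hik le_rfl
  have hint : ∫ t in (0:ℝ)..1, f t = ∑ i ∈ range (k n), ∫ t in x n i..x n (i+1), f t := by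
    rw [intervalIntegral.sum_integral_adjacent_intervals
      (fun i _ => hf.intervalIntegrable _ _), hx0, hx1]
  rw [dist_eq_norm, hint, ← Finset.sum_sub_distrib]
  have hterm : ∀ i ∈ range (k n),
      ‖F (x n i, x n (i+1)) - ∫ t in x n i..x n (i+1), f t‖ ≤ (ε/2) * (x n (i+1) - x n i) := by
    intro i hi
    have hik := Finset.mem_range.mp hi
    have hxi := hpt i hik.le
    have hxi1 := hpt (i+1) hik
    have hle := hmono n i hik
    have hcont : Continuous fun t => G (x n i, t) :=
      hGcont.comp (continuous_const.prodMk continuous_id)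
    rw [hFeq, ← intervalIntegral.integral_sub (hcont.intervalIntegrable _ _)
      (hf.intervalIntegrable _ _)]
    have hbound : ∀ t ∈ Set.uIoc (x n i) (x n (i+1)), ‖G (x n i, t) - f t‖ ≤ ε/2 := by
      intro t ht
      rw [Set.uIoc_of_le hle] at ht
      have htI : t ∈ Set.Icc (0:ℝ) 1 := ⟨le_trans hxi.1 ht.1.le, le_trans ht.2 hxi1.2⟩
      have hd : dist ((x n i, t) : ℝ × ℝ) ((t, t) : ℝ × ℝ) < δ := by
        have h1 : dist (x n i) t = t - x n i := by
          rw [Real.dist_eq, abs_sub_comm, abs_of_nonneg (by linarith [ht.1.le] : (0:ℝ) ≤ t - x n i)]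
        rw [Prod.dist_eq, h1, dist_self]
        have h3 := hNn i hik
        exact max_lt (by linarith [ht.2]) hδ
      have hcl := hδ2 (x n i, t) ⟨hxi, htI⟩ (t, t) ⟨htI, htI⟩ hd
      have hH0 : H (t, t) = 0 := by simp [hHdef, hGt t htI]
      rw [Real.dist_eq, hH0, sub_zero] at hcl
      have : H (x n i, t) = G (x n i, t) - f t := rfl
      rw [Real.norm_eq_abs, ← this]
      exact hcl.le
    have := intervalIntegral.norm_integral_le_of_norm_le_const hbound
    rwa [abs_of_nonneg (by linarith : (0:ℝ) ≤ x n (i+1) - x n i)] at this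
  calc ‖∑ i ∈ range (k n), (F (x n i, x n (i+1)) - ∫ t in x n i..x n (i+1), f t)‖
      ≤ ∑ i ∈ range (k n), ‖F (x n i, x n (i+1)) - ∫ t in x n i..x n (i+1), f t‖ :=
        norm_sum_le _ _
    _ ≤ ∑ i ∈ range (k n), (ε/2) * (x n (i+1) - x n i) := Finset.sum_le_sum hterm
    _ = (ε/2) * ∑ i ∈ range (k n), (x n (i+1) - x n i) := by rw [Finset.mul_sum]
    _ = (ε/2) * (x n (k n) - x n 0) := by rw [Finset.sum_range_sub (fun i => x n i)]
    _ = ε/2 := by rw [hx0, hx1]; ring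
    _ < ε := by linarith
end

section
/- Let 1/2 < α ≤ 1 and let x : [0,1] → ℝ be α-Hölder continuous. Let F : ℝ × ℝ → ℝ be twice continuously differentiable with F(x,x) = 0 for all x, and set f(x) := ∂_y F(x,y)|_{y=x}. For n ∈ ℕ let t_i = i/n be the uniform partition of [0,1]. Then the difference ∑_{i=0}^{n−1} F(x(t_i), x(t_{i+1})) − ∑_{i=0}^{n−1} f(x(t_i)) (x(t_{i+1}) − x(t_i)) tends to 0 as n → ∞. -/
/-!
By Taylor's formula in the second variable, `|F (a, b) - f a * (b - a)| ≤ M * (b - a) ^ 2` for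
`a, b` in the (bounded) range of the path, where `M` is a Lipschitz constant of `∂_y F` there.
The difference of the two sums is therefore at most `M` times the quadratic variation
`∑ (Δx)² ≤ n * (C * n ^ (-α)) ^ 2 = C ^ 2 * n ^ (1 - 2α)`, which tends to `0` because `α > 1/2`.
-/

open Filter Finset Set

theorem abs_sub_sub_mul_le_of_hasDerivWithinAt {g g' : ℝ → ℝ} {a b M : ℝ} (hM : 0 ≤ M)
    (hg : ∀ y ∈ uIcc a b, HasDerivWithinAt g (g' y) (uIcc a b) y)
    (hg' : ∀ y ∈ uIcc a b, |g' y - g' a| ≤ M * |y - a|) :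
    |g b - g a - g' a * (b - a)| ≤ M * (b - a) ^ 2 := by
  have hφ : ∀ y ∈ uIcc a b,
      HasDerivWithinAt (fun y => g y - g' a * y) (g' y - g' a) (uIcc a b) y := fun y hy =>
    (hg y hy).sub (by simpa using (hasDerivWithinAt_id y _).const_mul (g' a))
  have hφ' : ∀ y ∈ uIcc a b, ‖g' y - g' a‖ ≤ M * |b - a| := fun y hy =>
    (hg' y hy).trans (mul_le_mul_of_nonneg_left (abs_sub_left_of_mem_uIcc hy) hM)
  calc |g b - g a - g' a * (b - a)| = ‖(g b - g' a * b) - (g a - g' a * a)‖ := by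
        rw [Real.norm_eq_abs]; ring_nf
    _ ≤ M * |b - a| * ‖b - a‖ := (convex_uIcc a b).norm_image_sub_le_of_norm_hasDerivWithin_le
        hφ hφ' left_mem_uIcc right_mem_uIcc
    _ = M * (b - a) ^ 2 := by rw [Real.norm_eq_abs, mul_assoc, ← sq, sq_abs]

theorem ContDiff.exists_abs_sub_sub_deriv_mul_le_sq {F : ℝ × ℝ → ℝ} (hF : ContDiff ℝ 2 F)
    {s : Set ℝ} (hs : Convex ℝ s) (hs' : IsCompact s) :
    ∃ M, ∀ a ∈ s, ∀ b ∈ s,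
      |F (a, b) - F (a, a) - deriv (fun y => F (a, y)) a * (b - a)| ≤ M * (b - a) ^ 2 := by
  set D₂F : ℝ × ℝ → ℝ := fun p => fderiv ℝ F p (0, 1)
  have hD₂F : ∀ a y, HasDerivAt (fun y => F (a, y)) (D₂F (a, y)) y := fun a y =>
    (hF.differentiable two_ne_zero (a, y)).hasFDerivAt.comp_hasDerivAt y
      ((hasDerivAt_const y a).prodMk (hasDerivAt_id y))
  have hD₂F_smooth : ContDiff ℝ 1 D₂F := (hF.fderiv_right (by norm_num)).clm_apply contDiff_const
  obtain ⟨K, hK⟩ :=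
    hD₂F_smooth.contDiffOn.exists_lipschitzOnWith one_ne_zero (hs.prod hs) (hs'.prod hs')
  refine ⟨K, fun a ha b hb => ?_⟩
  rw [(hD₂F a a).deriv]
  refine abs_sub_sub_mul_le_of_hasDerivWithinAt K.2 (fun y _ => (hD₂F a y).hasDerivWithinAt)
    fun y hy => ?_
  have hys : y ∈ s := hs.ordConnected.uIcc_subset ha hb hy
  simpa [Real.dist_eq, Prod.dist_eq] using
    hK.dist_le_mul _ (mk_mem_prod ha hys) _ (mk_mem_prod ha ha)

section HolderPath

variable {α C : ℝ} {x : ℝ → ℝ}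

theorem abs_apply_le_of_holder (hα : 0 ≤ α)
    (hx : ∀ s ∈ Icc (0 : ℝ) 1, ∀ t ∈ Icc (0 : ℝ) 1, |x s - x t| ≤ C * |s - t| ^ α)
    {t : ℝ} (ht : t ∈ Icc (0 : ℝ) 1) : |x t| ≤ |x 0| + |C| := by
  have hpow : |t - 0| ^ α ≤ 1 :=
    Real.rpow_le_one (abs_nonneg _) (by rw [sub_zero, abs_of_nonneg ht.1]; exact ht.2) hα
  have hinc : |x t - x 0| ≤ |C| :=
    calc |x t - x 0| ≤ C * |t - 0| ^ α := hx t ht 0 (left_mem_Icc.2 zero_le_one)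
      _ ≤ |C| * 1 := mul_le_mul (le_abs_self C) hpow (by positivity) (abs_nonneg C)
      _ = |C| := mul_one _
  linarith [abs_sub_abs_le_abs_sub (x t) (x 0)]

theorem natCast_div_mem_Icc {i n : ℕ} (h : i ≤ n) : (i : ℝ) / n ∈ Icc (0 : ℝ) 1 :=
  ⟨by positivity, div_le_one_of_le₀ (by exact_mod_cast h) n.cast_nonneg⟩

theorem sq_increment_le_of_holder
    (hx : ∀ s ∈ Icc (0 : ℝ) 1, ∀ t ∈ Icc (0 : ℝ) 1, |x s - x t| ≤ C * |s - t| ^ α)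
    {n i : ℕ} (hi : i < n) :
    (x (((i : ℝ) + 1) / n) - x ((i : ℝ) / n)) ^ 2 ≤ C ^ 2 * (n : ℝ) ^ (-2 * α) := by
  have hn : (0 : ℝ) < n := by exact_mod_cast hi.trans_le' i.zero_le
  have hi' : ((i : ℝ) + 1) / n ∈ Icc (0 : ℝ) 1 := by exact_mod_cast natCast_div_mem_Icc hi
  have hstep : |((i : ℝ) + 1) / n - i / n| = (n : ℝ)⁻¹ := by
    rw [div_sub_div_same, add_sub_cancel_left, one_div, abs_of_pos (inv_pos.2 hn)]
  have hinc := hx _ hi' _ (natCast_div_mem_Icc hi.le)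
  rw [hstep, Real.inv_rpow hn.le, ← Real.rpow_neg hn.le] at hinc
  calc (x (((i : ℝ) + 1) / n) - x ((i : ℝ) / n)) ^ 2
      ≤ (C * (n : ℝ) ^ (-α)) ^ 2 := by
        rw [← sq_abs]; exact pow_le_pow_left₀ (abs_nonneg _) hinc 2
    _ = C ^ 2 * (n : ℝ) ^ (-2 * α) := by
      rw [mul_pow, ← Real.rpow_mul_natCast hn.le]; ring_nf

theorem tendsto_sum_sq_increments_of_holder (hα : 1 / 2 < α)
    (hx : ∀ s ∈ Icc (0 : ℝ) 1, ∀ t ∈ Icc (0 : ℝ) 1, |x s - x t| ≤ C * |s - t| ^ α) :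
    Tendsto (fun n : ℕ => ∑ i ∈ range n, (x (((i : ℝ) + 1) / n) - x ((i : ℝ) / n)) ^ 2)
      atTop (nhds 0) := by
  have hbound : ∀ n : ℕ, ∑ i ∈ range n, (x (((i : ℝ) + 1) / n) - x ((i : ℝ) / n)) ^ 2
      ≤ C ^ 2 * (n : ℝ) ^ (1 - 2 * α) := by
    intro n
    rcases n.eq_zero_or_pos with rfl | hn
    · simp [Real.zero_rpow (show 1 - 2 * α ≠ 0 by linarith)]
    calc ∑ i ∈ range n, (x (((i : ℝ) + 1) / n) - x ((i : ℝ) / n)) ^ 2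
        ≤ ∑ _i ∈ range n, C ^ 2 * (n : ℝ) ^ (-2 * α) :=
          sum_le_sum fun i hi => sq_increment_le_of_holder hx (mem_range.1 hi)
      _ = C ^ 2 * (n : ℝ) ^ (1 - 2 * α) := by
        rw [sum_const, card_range, nsmul_eq_mul, sub_eq_add_neg, neg_mul_eq_neg_mul,
          Real.rpow_add (by exact_mod_cast hn), Real.rpow_one]
        ring
  have hdecay : Tendsto (fun n : ℕ => (n : ℝ) ^ (1 - 2 * α)) atTop (nhds 0) := by
    simpa [neg_sub, Function.comp_def] using
      (tendsto_rpow_neg_atTop (y := 2 * α - 1) (by linarith)).comp tendsto_natCast_atTop_atTop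
  exact squeeze_zero (fun n => sum_nonneg fun i _ => sq_nonneg _) hbound
    (by simpa using hdecay.const_mul (C ^ 2))

end HolderPath

theorem generalized_sum_sub_leftpoint_tendsto_zero_holder_general
    (α : ℝ) (hα₁ : 1 / 2 < α)
    (x : ℝ → ℝ)
    (hHolder : ∃ C : ℝ, ∀ s ∈ Set.Icc (0 : ℝ) 1, ∀ t ∈ Set.Icc (0 : ℝ) 1,
      |x s - x t| ≤ C * |s - t| ^ α)
    (F : ℝ × ℝ → ℝ) (hF : ContDiff ℝ 2 F)
    (hdiag : ∀ a : ℝ, F (a, a) = 0)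
    (f : ℝ → ℝ) (hf : ∀ a : ℝ, f a = deriv (fun y => F (a, y)) a) :
    Tendsto (fun n : ℕ =>
      (∑ i ∈ Finset.range n, F (x ((i : ℝ) / n), x (((i : ℝ) + 1) / n)))
      - ∑ i ∈ Finset.range n,
          f (x ((i : ℝ) / n)) * (x (((i : ℝ) + 1) / n) - x ((i : ℝ) / n)))
      atTop (nhds 0) := by
  obtain ⟨C, hC⟩ := hHolder
  set R := |x 0| + |C|
  have hxR : ∀ t ∈ Icc (0 : ℝ) 1, x t ∈ Icc (-R) R := fun t ht =>
    abs_le.1 (abs_apply_le_of_holder (by linarith) hC ht)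
  obtain ⟨M, hTaylor⟩ :=
    hF.exists_abs_sub_sub_deriv_mul_le_sq (convex_Icc (-R) R) isCompact_Icc
  refine squeeze_zero_norm (fun n => ?_)
    (by simpa using (tendsto_sum_sq_increments_of_holder hα₁ hC).const_mul M)
  rw [← sum_sub_distrib, mul_sum]
  refine (norm_sum_le _ _).trans (sum_le_sum fun i hi => ?_)
  have hi : i < n := mem_range.1 hi
  have hi' : ((i : ℝ) + 1) / n ∈ Icc (0 : ℝ) 1 := by exact_mod_cast natCast_div_mem_Icc hi
  simpa [hf, hdiag] using hTaylor _ (hxR _ (natCast_div_mem_Icc hi.le)) _ (hxR _ hi')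

/-- For an `α`-Hölder path `x` with `α > 1/2`, and a `C²` two-point function `F` vanishing
on the diagonal with first-order diagonal data `f(x) = ∂_y F(x,y)|_{y=x}`, the difference
between the generalized Riemann sums `∑ F(x(t_i), x(t_{i+1}))` and the first-order sums
`∑ f(x(t_i))(x(t_{i+1}) − x(t_i))` along the uniform partition `t_i = i/n` of `[0,1]`
tends to `0` as `n → ∞`. -/
theorem generalized_sum_sub_leftpoint_tendsto_zero_holder
    (α : ℝ) (hα₁ : 1 / 2 < α) (hα₂ : α ≤ 1)
    (x : ℝ → ℝ)
    (hHolder : ∃ C : ℝ, ∀ s ∈ Set.Icc (0 : ℝ) 1, ∀ t ∈ Set.Icc (0 : ℝ) 1,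
      |x s - x t| ≤ C * |s - t| ^ α)
    (F : ℝ × ℝ → ℝ) (hF : ContDiff ℝ 2 F)
    (hdiag : ∀ a : ℝ, F (a, a) = 0)
    (f : ℝ → ℝ) (hf : ∀ a : ℝ, f a = deriv (fun y => F (a, y)) a) :
    Tendsto (fun n : ℕ =>
      (∑ i ∈ Finset.range n, F (x ((i : ℝ) / n), x (((i : ℝ) + 1) / n)))
      - ∑ i ∈ Finset.range n,
          f (x ((i : ℝ) / n)) * (x (((i : ℝ) + 1) / n) - x ((i : ℝ) / n)))
      atTop (nhds 0) :=
  generalized_sum_sub_leftpoint_tendsto_zero_holder_general α hα₁ x hHolder F hF hdiag f hf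
end

section
/- Let (Ω, 𝓕, P) be a probability space and B : [0,1] × Ω → ℝ a standard Brownian motion: B_0 = 0 almost surely, for 0 ≤ s ≤ t ≤ 1 the increment B_t − B_s is independent of (B_r)_{r ≤ s} and is Gaussian with mean 0 and variance t − s, and t ↦ B_t(ω) is continuous for almost every ω. Let F : ℝ → ℝ be smooth with bounded first, second, and third derivatives. For n ∈ ℕ let t_i = i/n be the uniform partition of [0,1]. Then the midpoint sums ∑_{i=0}^{n−1} F'((B_{t_i} + B_{t_{i+1}})/2)(B_{t_{i+1}} − B_{t_i}) converge in L²(P), as n → ∞, to F(B_1) − F(B_0). -/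
open Filter Finset MeasureTheory ProbabilityTheory
open scoped NNReal ENNReal Real



lemma midpoint_taylor_bound (F : ℝ → ℝ) (hF : ContDiff ℝ (⊤ : ℕ∞) F) {C : ℝ}
    (hC : ∀ a, |deriv (deriv (deriv F)) a| ≤ C) (a b : ℝ) :
    |F b - F a - deriv F ((a + b) / 2) * (b - a)| ≤ C * |b - a| ^ 3 := by
  obtain ⟨hFd, hF1⟩ := contDiff_infty_iff_deriv.mp (hF.of_le (by simp))
  obtain ⟨hF1d, hF2⟩ := contDiff_infty_iff_deriv.mp hF1
  obtain ⟨hF2d, _⟩ := contDiff_infty_iff_deriv.mp hF2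
  have hC0 : 0 ≤ C := le_trans (abs_nonneg _) (hC 0)
  set m := (a + b) / 2 with hm
  have hlip : ∀ x y : ℝ, |deriv (deriv F) y - deriv (deriv F) x| ≤ C * |y - x| := by
    intro x y
    have := Convex.norm_image_sub_le_of_norm_hasDerivWithin_le
      (f := deriv (deriv F)) (f' := deriv (deriv (deriv F))) (s := Set.univ)
      (fun z _ => (hF2d z).hasDerivAt.hasDerivWithinAt)
      (fun z _ => by simpa [Real.norm_eq_abs] using hC z) convex_univ (Set.mem_univ x)
      (Set.mem_univ y)
    simpa [Real.norm_eq_abs] using this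
  have hquad : ∀ x : ℝ, |deriv F x - deriv F m - deriv (deriv F) m * (x - m)|
      ≤ C * |x - m| ^ 2 := by
    intro x
    have hg : ∀ y ∈ Set.uIcc m x,
        HasDerivWithinAt (fun y => deriv F y - deriv (deriv F) m * y)
          (deriv (deriv F) y - deriv (deriv F) m) (Set.uIcc m x) y := by
      intro y _
      have hc : HasDerivAt (fun y : ℝ => deriv (deriv F) m * y) (deriv (deriv F) m) y := by
        simpa using (hasDerivAt_id y).const_mul (deriv (deriv F) m)
      exact (((hF1d y).hasDerivAt).sub hc).hasDerivWithinAt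
    have hbound : ∀ y ∈ Set.uIcc m x,
        ‖deriv (deriv F) y - deriv (deriv F) m‖ ≤ C * |x - m| := by
      intro y hy
      rw [Real.norm_eq_abs]
      refine (hlip m y).trans ?_
      have h1 := Set.abs_sub_left_of_mem_uIcc hy
      nlinarith [abs_nonneg (y - m), abs_nonneg (x - m)]
    have := Convex.norm_image_sub_le_of_norm_hasDerivWithin_le hg hbound (convex_uIcc m x)
      Set.left_mem_uIcc Set.right_mem_uIcc
    rw [Real.norm_eq_abs, Real.norm_eq_abs] at this
    calc |deriv F x - deriv F m - deriv (deriv F) m * (x - m)|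
        = |(deriv F x - deriv (deriv F) m * x) - (deriv F m - deriv (deriv F) m * m)| := by
          congr 1; ring
      _ ≤ C * |x - m| * |x - m| := this
      _ = C * |x - m| ^ 2 := by ring
  set k : ℝ → ℝ := fun y => F y - deriv F m * y - deriv (deriv F) m / 2 * (y - m) ^ 2 with hk
  have hk' : ∀ y, HasDerivAt k (deriv F y - deriv F m - deriv (deriv F) m * (y - m)) y := by
    intro y
    have h1 : HasDerivAt (fun y : ℝ => deriv F m * y) (deriv F m) y := by
      simpa using (hasDerivAt_id y).const_mul (deriv F m)
    have h2 : HasDerivAt (fun y : ℝ => deriv (deriv F) m / 2 * (y - m) ^ 2)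
        (deriv (deriv F) m * (y - m)) y := by
      have := (((hasDerivAt_id y).sub_const m).pow 2).const_mul (deriv (deriv F) m / 2)
      refine this.congr_deriv ?_
      simp; ring
    exact ((hFd y).hasDerivAt.sub h1).sub h2
  have hkb : ∀ y ∈ Set.uIcc a b,
      ‖deriv F y - deriv F m - deriv (deriv F) m * (y - m)‖ ≤ C * (|b - a| / 2) ^ 2 := by
    intro y hy
    rw [Real.norm_eq_abs]
    refine (hquad y).trans ?_
    have hym : |y - m| ≤ |b - a| / 2 := by
      rcases le_total a b with hab | hab
      · rw [Set.uIcc_of_le hab, Set.mem_Icc] at hy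
        rw [abs_of_nonneg (by linarith : (0:ℝ) ≤ b - a), abs_le]
        exact ⟨by rw [hm]; linarith [hy.1, hy.2], by rw [hm]; linarith [hy.1, hy.2]⟩
      · rw [Set.uIcc_of_ge hab, Set.mem_Icc] at hy
        rw [abs_of_nonpos (by linarith : b - a ≤ (0:ℝ)), abs_le]
        exact ⟨by rw [hm]; linarith [hy.1, hy.2], by rw [hm]; linarith [hy.1, hy.2]⟩
    nlinarith [abs_nonneg (y - m), mul_self_le_mul_self (abs_nonneg (y - m)) hym]
  have key := Convex.norm_image_sub_le_of_norm_hasDerivWithin_le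
    (fun y _ => (hk' y).hasDerivWithinAt) hkb (convex_uIcc a b)
    Set.left_mem_uIcc Set.right_mem_uIcc
  rw [Real.norm_eq_abs, Real.norm_eq_abs] at key
  have hk_eq : k b - k a = F b - F a - deriv F m * (b - a) := by
    simp only [hk, hm]; ring
  rw [hk_eq] at key
  calc |F b - F a - deriv F m * (b - a)| ≤ C * (|b - a| / 2) ^ 2 * |b - a| := key
    _ ≤ C * |b - a| ^ 3 := by nlinarith [mul_nonneg hC0 (pow_nonneg (abs_nonneg (b - a)) 3)]


noncomputable def stdSixMoment : ℝ := ∫ x, x ^ 6 ∂(gaussianReal 0 1)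

lemma stdSixMoment_nonneg : 0 ≤ stdSixMoment :=
  integral_nonneg fun x => by positivity

lemma integrable_pow_six_std : Integrable (fun x : ℝ => x ^ 6) (gaussianReal 0 1) := by
  rw [gaussianReal_of_var_ne_zero 0 one_ne_zero,
    integrable_withDensity_iff (measurable_gaussianPDF 0 1)
      (ae_of_all _ fun x => ENNReal.ofReal_lt_top)]
  have key : Integrable (fun x : ℝ => x ^ (6:ℕ) * Real.exp (-(2⁻¹) * x ^ 2)) := by
    have h := integrable_rpow_mul_exp_neg_mul_sq (by norm_num : (0:ℝ) < 2⁻¹)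
      (by norm_num : (-1:ℝ) < ((6:ℕ):ℝ))
    have h2 : ∀ x : ℝ, x ^ (((6:ℕ):ℝ)) = x ^ (6:ℕ) := fun x => Real.rpow_natCast x 6
    simpa only [h2] using h
  have heq : (fun x : ℝ => x ^ 6 * (gaussianPDF 0 1 x).toReal)
      = fun x => (Real.sqrt (2 * Real.pi * 1))⁻¹ * (x ^ (6:ℕ) * Real.exp (-(2⁻¹) * x ^ 2)) := by
    funext x
    rw [gaussianPDF, ENNReal.toReal_ofReal (gaussianPDFReal_nonneg _ _ _), gaussianPDFReal]
    have : -(x - 0) ^ 2 / (2 * ((1:ℝ≥0):ℝ)) = -(2⁻¹) * x ^ 2 := by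
      push_cast; ring
    rw [this]
    push_cast
    ring
  rw [heq]
  exact key.const_mul _

lemma gaussianReal_eq_map (v : ℝ≥0) :
    gaussianReal 0 v = Measure.map (fun x => Real.sqrt v * x) (gaussianReal 0 1) := by
  have h := gaussianReal_map_const_mul (μ := 0) (v := 1) (Real.sqrt v)
  have h2 : (⟨(Real.sqrt v) ^ 2, sq_nonneg _⟩ : ℝ≥0) * 1 = v := by
    ext
    simp [Real.sq_sqrt v.coe_nonneg]
  rw [mul_zero] at h
  convert h.symm using 2
  exact h2.symm

lemma integrable_pow_six_gaussian (v : ℝ≥0) :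
    Integrable (fun x : ℝ => x ^ 6) (gaussianReal 0 v) := by
  rw [gaussianReal_eq_map v,
    integrable_map_measure ((measurable_id'.pow_const 6).aestronglyMeasurable)
      ((measurable_const_mul _).aemeasurable)]
  have : ((fun x : ℝ => x ^ 6) ∘ fun x => Real.sqrt v * x)
      = fun x : ℝ => (Real.sqrt v) ^ 6 * x ^ 6 := by
    funext x; simp [Function.comp, mul_pow]
  rw [this]
  exact integrable_pow_six_std.const_mul _

lemma sixMoment_gaussian (v : ℝ≥0) :
    ∫ x, x ^ 6 ∂(gaussianReal 0 v) = (v:ℝ) ^ 3 * stdSixMoment := by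
  rw [gaussianReal_eq_map v,
    integral_map ((measurable_const_mul _).aemeasurable)
      ((measurable_id'.pow_const 6).aestronglyMeasurable)]
  have : ∀ x : ℝ, (Real.sqrt v * x) ^ 6 = (v:ℝ) ^ 3 * x ^ 6 := by
    intro x
    rw [mul_pow, show (6:ℕ) = 2 * 3 from rfl, pow_mul, Real.sq_sqrt v.coe_nonneg]
  simp_rw [this]
  rw [integral_const_mul]
  rfl
lemma cube_prod_le (x y : ℝ) : |x| ^ 3 * |y| ^ 3 ≤ (x ^ 6 + y ^ 6) / 2 := by
  have hx : (|x| ^ 3) ^ 2 = x ^ 6 := by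
    rw [← pow_mul, show 3*2 = 6 from rfl, pow_abs,
      abs_of_nonneg (by positivity : (0:ℝ) ≤ x ^ 6)]
  have hy : (|y| ^ 3) ^ 2 = y ^ 6 := by
    rw [← pow_mul, show 3*2 = 6 from rfl, pow_abs,
      abs_of_nonneg (by positivity : (0:ℝ) ≤ y ^ 6)]
  nlinarith [sq_nonneg (|x| ^ 3 - |y| ^ 3), hx, hy]

/-- Fundamental theorem of calculus for the Stratonovich integral: for a standard Brownian
motion `B` on `[0,1]` and a smooth `F` with bounded first, second and third derivatives,
the midpoint sums `∑ F'((B_{t_i}+B_{t_{i+1}})/2)(B_{t_{i+1}} − B_{t_i})` along the uniform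
partition `t_i = i/n` converge in `L²(P)` to `F(B_1) − F(B_0)`. -/
theorem stratonovich_midpoint_sum_tendsto_ftc
    {Ω : Type*} [MeasurableSpace Ω] (P : Measure Ω) [IsProbabilityMeasure P]
    (B : ℝ → Ω → ℝ)
    (hmeas : ∀ t, Measurable (B t))
    (hzero : ∀ᵐ ω ∂P, B 0 ω = 0)
    (hgauss : ∀ s t : ℝ, 0 ≤ s → s ≤ t → t ≤ 1 →
      Measure.map (fun ω => B t ω - B s ω) P = gaussianReal 0 (Real.toNNReal (t - s)))
    (hindep : ∀ s t : ℝ, 0 ≤ s → s ≤ t → t ≤ 1 →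
      IndepFun (fun ω => B t ω - B s ω) (fun ω => fun r : Set.Iic s => B r ω) P)
    (hcont : ∀ᵐ ω ∂P, ContinuousOn (fun t => B t ω) (Set.Icc 0 1))
    (F : ℝ → ℝ) (hF : ContDiff ℝ (⊤ : ℕ∞) F)
    (hF1b : ∃ C, ∀ a, |deriv F a| ≤ C)
    (hF2b : ∃ C, ∀ a, |deriv (deriv F) a| ≤ C)
    (hF3b : ∃ C, ∀ a, |deriv (deriv (deriv F)) a| ≤ C) :
    Tendsto (fun n : ℕ => ∫ ω,
      ((∑ i ∈ Finset.range n,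
          deriv F ((B ((i : ℝ) / n) ω + B (((i : ℝ) + 1) / n) ω) / 2)
            * (B (((i : ℝ) + 1) / n) ω - B ((i : ℝ) / n) ω))
        - (F (B 1 ω) - F (B 0 ω))) ^ 2 ∂P)
      atTop (nhds 0) := by
  obtain ⟨C3, hC3⟩ := hF3b
  have hC30 : 0 ≤ C3 := le_trans (abs_nonneg _) (hC3 0)
  have hupper : ∀ n : ℕ, 1 ≤ n →
      (∫ ω, ((∑ i ∈ Finset.range n,
          deriv F ((B ((i : ℝ) / n) ω + B (((i : ℝ) + 1) / n) ω) / 2)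
            * (B (((i : ℝ) + 1) / n) ω - B ((i : ℝ) / n) ω))
        - (F (B 1 ω) - F (B 0 ω))) ^ 2 ∂P) ≤ C3 ^ 2 * stdSixMoment * (1 / n) := by
    intro n hn
    have hn0 : (n:ℝ) ≠ 0 := Nat.cast_ne_zero.mpr (by omega)
    have hnpos : (0:ℝ) < n := Nat.cast_pos.mpr (by omega)
    set d : ℕ → Ω → ℝ := fun i ω => B (((i:ℝ)+1)/n) ω - B ((i:ℝ)/n) ω with hd
    have hd_meas : ∀ i, Measurable (d i) := fun i => (hmeas _).sub (hmeas _)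
    set a : ℕ → Ω → ℝ := fun i ω => |d i ω| ^ 3 with ha
    have ha_meas : ∀ i, Measurable (a i) := fun i => ((hd_meas i).abs.pow_const 3)
    have ha_nonneg : ∀ i ω, 0 ≤ a i ω := fun i ω => by
      show (0:ℝ) ≤ |d i ω| ^ 3
      positivity
    have hsq : ∀ i ω, a i ω ^ 2 = d i ω ^ 6 := by
      intro i ω
      show (|d i ω| ^ 3) ^ 2 = d i ω ^ 6
      rw [← pow_mul, show 3*2 = 6 from rfl, pow_abs,
        abs_of_nonneg (by positivity : (0:ℝ) ≤ d i ω ^ 6)]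
    have hmap : ∀ i, i < n →
        Measure.map (d i) P = gaussianReal 0 (Real.toNNReal (1 / (n:ℝ))) := by
      intro i hi
      have h0 : (0:ℝ) ≤ (i:ℝ)/n := by positivity
      have h1 : ((i:ℝ))/n ≤ ((i:ℝ)+1)/n :=
        (div_le_div_iff_of_pos_right hnpos).mpr (by linarith)
      have h2 : ((i:ℝ)+1)/n ≤ 1 := by
        rw [div_le_one hnpos]
        have : (i:ℝ) + 1 ≤ (n:ℝ) := by exact_mod_cast Nat.succ_le_of_lt hi
        linarith
      have h := hgauss ((i:ℝ)/n) (((i:ℝ)+1)/n) h0 h1 h2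
      rw [show ((i:ℝ)+1)/n - (i:ℝ)/n = 1/(n:ℝ) by ring] at h
      exact h
    have hv : ((Real.toNNReal (1 / (n:ℝ)) : ℝ≥0) : ℝ) = 1/(n:ℝ) :=
      Real.coe_toNNReal _ (by positivity)
    have hint6 : ∀ i, i < n → Integrable (fun ω => d i ω ^ 6) P := by
      intro i hi
      have h := integrable_pow_six_gaussian (Real.toNNReal (1 / (n:ℝ)))
      rw [← hmap i hi] at h
      have h2 := (integrable_map_measure (measurable_id'.pow_const 6).aestronglyMeasurable
        (hd_meas i).aemeasurable).mp h
      exact h2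
    have hval6 : ∀ i, i < n → ∫ ω, d i ω ^ 6 ∂P = (1/(n:ℝ)) ^ 3 * stdSixMoment := by
      intro i hi
      have h := integral_map (μ := P) (φ := d i) (hd_meas i).aemeasurable
        (f := fun x : ℝ => x ^ 6) (measurable_id'.pow_const 6).aestronglyMeasurable
      rw [hmap i hi, sixMoment_gaussian, hv] at h
      exact h.symm
    have hprod_le : ∀ i j ω, a i ω * a j ω ≤ (d i ω ^ 6 + d j ω ^ 6) / 2 := by
      intro i j ω
      show |d i ω| ^ 3 * |d j ω| ^ 3 ≤ (d i ω ^ 6 + d j ω ^ 6) / 2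
      exact cube_prod_le _ _
    have hgint : ∀ i j, i < n → j < n →
        Integrable (fun ω => (d i ω ^ 6 + d j ω ^ 6) / 2) P :=
      fun i j hi hj => ((hint6 i hi).add (hint6 j hj)).div_const 2
    have hprod_int : ∀ i j, i < n → j < n → Integrable (fun ω => a i ω * a j ω) P := by
      intro i j hi hj
      refine Integrable.mono' (hgint i j hi hj)
        (((ha_meas i).mul (ha_meas j)).aestronglyMeasurable) (ae_of_all _ fun ω => ?_)
      rw [Real.norm_eq_abs, abs_of_nonneg (mul_nonneg (ha_nonneg i ω) (ha_nonneg j ω))]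
      exact hprod_le i j ω
    have hprod_val : ∀ i j, i < n → j < n →
        ∫ ω, a i ω * a j ω ∂P ≤ (1/(n:ℝ)) ^ 3 * stdSixMoment := by
      intro i j hi hj
      calc ∫ ω, a i ω * a j ω ∂P
          ≤ ∫ ω, (d i ω ^ 6 + d j ω ^ 6) / 2 ∂P :=
            integral_mono_of_nonneg
              (ae_of_all _ fun ω => mul_nonneg (ha_nonneg i ω) (ha_nonneg j ω))
              (hgint i j hi hj) (ae_of_all _ fun ω => hprod_le i j ω)
        _ = ((∫ ω, d i ω ^ 6 ∂P) + ∫ ω, d j ω ^ 6 ∂P) / 2 := by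
            rw [integral_div, integral_add (hint6 i hi) (hint6 j hj)]
        _ = (1/(n:ℝ)) ^ 3 * stdSixMoment := by rw [hval6 i hi, hval6 j hj]; ring
    have hptwise : ∀ ω, ((∑ i ∈ Finset.range n,
          deriv F ((B ((i : ℝ) / n) ω + B (((i : ℝ) + 1) / n) ω) / 2)
            * (B (((i : ℝ) + 1) / n) ω - B ((i : ℝ) / n) ω))
        - (F (B 1 ω) - F (B 0 ω))) ^ 2
        ≤ C3 ^ 2 * ∑ i ∈ Finset.range n, ∑ j ∈ Finset.range n, a i ω * a j ω := by
      intro ω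
      have htel : F (B 1 ω) - F (B 0 ω)
          = ∑ i ∈ Finset.range n, (F (B (((i:ℝ)+1)/n) ω) - F (B ((i:ℝ)/n) ω)) := by
        have h := Finset.sum_range_sub (fun i : ℕ => F (B ((i:ℝ)/n) ω)) n
        push_cast at h
        rw [div_self hn0, zero_div] at h
        exact h.symm
      have habs : |(∑ i ∈ Finset.range n,
            deriv F ((B ((i : ℝ) / n) ω + B (((i : ℝ) + 1) / n) ω) / 2)
              * (B (((i : ℝ) + 1) / n) ω - B ((i : ℝ) / n) ω))
          - (F (B 1 ω) - F (B 0 ω))| ≤ ∑ i ∈ Finset.range n, C3 * a i ω := by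
        rw [htel, ← Finset.sum_sub_distrib]
        refine (Finset.abs_sum_le_sum_abs _ _).trans (Finset.sum_le_sum fun i _ => ?_)
        rw [abs_sub_comm]
        exact midpoint_taylor_bound F hF hC3 (B ((i:ℝ)/n) ω) (B (((i:ℝ)+1)/n) ω)
      calc ((∑ i ∈ Finset.range n,
            deriv F ((B ((i : ℝ) / n) ω + B (((i : ℝ) + 1) / n) ω) / 2)
              * (B (((i : ℝ) + 1) / n) ω - B ((i : ℝ) / n) ω))
          - (F (B 1 ω) - F (B 0 ω))) ^ 2
          = |(∑ i ∈ Finset.range n,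
            deriv F ((B ((i : ℝ) / n) ω + B (((i : ℝ) + 1) / n) ω) / 2)
              * (B (((i : ℝ) + 1) / n) ω - B ((i : ℝ) / n) ω))
          - (F (B 1 ω) - F (B 0 ω))| ^ 2 := (sq_abs _).symm
        _ ≤ (∑ i ∈ Finset.range n, C3 * a i ω) ^ 2 :=
            pow_le_pow_left₀ (abs_nonneg _) habs 2
        _ = C3 ^ 2 * ∑ i ∈ Finset.range n, ∑ j ∈ Finset.range n, a i ω * a j ω := by
            rw [← Finset.mul_sum, mul_pow]
            congr 1
            rw [sq, Finset.sum_mul_sum]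
    have hY_int : Integrable (fun ω => C3 ^ 2 * ∑ i ∈ Finset.range n,
        ∑ j ∈ Finset.range n, a i ω * a j ω) P := by
      refine Integrable.const_mul ?_ _
      refine integrable_finset_sum _ fun i hi => ?_
      refine integrable_finset_sum _ fun j hj => ?_
      exact hprod_int i j (Finset.mem_range.mp hi) (Finset.mem_range.mp hj)
    refine le_trans (integral_mono_of_nonneg (ae_of_all _ fun ω => sq_nonneg _) hY_int
      (ae_of_all _ hptwise)) ?_
    rw [integral_const_mul, integral_finset_sum _ (fun i hi =>
      integrable_finset_sum _ fun j hj =>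
        hprod_int i j (Finset.mem_range.mp hi) (Finset.mem_range.mp hj))]
    have hswap : ∀ i ∈ Finset.range n,
        ∫ ω, ∑ j ∈ Finset.range n, a i ω * a j ω ∂P
          = ∑ j ∈ Finset.range n, ∫ ω, a i ω * a j ω ∂P := fun i hi =>
      integral_finset_sum _ fun j hj =>
        hprod_int i j (Finset.mem_range.mp hi) (Finset.mem_range.mp hj)
    rw [Finset.sum_congr rfl hswap]
    calc C3 ^ 2 * ∑ i ∈ Finset.range n, ∑ j ∈ Finset.range n, ∫ ω, a i ω * a j ω ∂P
        ≤ C3 ^ 2 * ∑ _i ∈ Finset.range n, ∑ _j ∈ Finset.range n,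
            (1/(n:ℝ)) ^ 3 * stdSixMoment := by
          gcongr with i hi j hj
          exact hprod_val i j (Finset.mem_range.mp hi) (Finset.mem_range.mp hj)
      _ = C3 ^ 2 * stdSixMoment * (1 / n) := by
          simp only [Finset.sum_const, Finset.card_range, nsmul_eq_mul]
          field_simp
  have hlow : ∀ n : ℕ, 0 ≤ ∫ ω, ((∑ i ∈ Finset.range n,
      deriv F ((B ((i : ℝ) / n) ω + B (((i : ℝ) + 1) / n) ω) / 2)
        * (B (((i : ℝ) + 1) / n) ω - B ((i : ℝ) / n) ω))
      - (F (B 1 ω) - F (B 0 ω))) ^ 2 ∂P :=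
    fun n => integral_nonneg fun ω => sq_nonneg _
  have htop : Tendsto (fun n : ℕ => C3 ^ 2 * stdSixMoment * (1/(n:ℝ))) atTop (nhds 0) := by
    have h := tendsto_one_div_atTop_nhds_zero_nat.const_mul (C3 ^ 2 * stdSixMoment)
    simpa using h
  refine tendsto_of_tendsto_of_tendsto_of_le_of_le' tendsto_const_nhds htop
    (Eventually.of_forall hlow) ?_
  filter_upwards [eventually_ge_atTop 1] with n hn using hupper n hn
end

section
/- Let (Ω, 𝓕, P) be a probability space and B : [0,1] × Ω → ℝ a standard Brownian motion: B_0 = 0 almost surely, for 0 ≤ s ≤ t ≤ 1 the increment B_t − B_s is independent of (B_r)_{r ≤ s} and is Gaussian with mean 0 and variance t − s, and t ↦ B_t(ω) is continuous for almost every ω. Let g : ℝ → ℝ be bounded and Lipschitz. For n ∈ ℕ let t_i = i/n be the uniform partition of [0,1]. Then ∑_{i=0}^{n−1} g(B_{t_i}) (B_{t_{i+1}} − B_{t_i})² converges in L²(P), as n → ∞, to ∫_0^1 g(B_t) dt. -/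
open Filter Finset MeasureTheory ProbabilityTheory
open scoped NNReal ENNReal Topology

/-!
Split the error as `Q_n + (R_n - ∫₀¹ g(B_t) dt)`, where `R_n = ∑ g(B_{t_i}) / n` is a Riemann sum
and `Q_n = ∑ g(B_{t_i}) ((B_{t_{i+1}} - B_{t_i})² - 1/n)`.

The summands of `Q_n` are orthogonal in `L²(P)`: the compensated square `(ΔB_j)² - Δt_j` is
centred and independent of the path up to `t_j`, which determines every earlier summand. Gaussian
scaling gives `E[((ΔB_j)² - Δt_j)²] = κ Δt_j²` with `κ = E[(Z² - 1)²] = 2` for a standard normal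
`Z`, so `E[Q_n²] ≤ C² κ / n` when `|g| ≤ C`.

Almost every path is continuous, so `R_n → ∫₀¹ g(B_t) dt` almost surely, with `|R_n| ≤ C`;
dominated convergence upgrades this to convergence in `L²(P)`.
-/

lemma abs_mul_sub_integral_le {f : ℝ → ℝ} {a b ε : ℝ} (hab : a ≤ b)
    (hf : IntervalIntegrable f volume a b) (hε : ∀ x ∈ Set.Icc a b, |f a - f x| ≤ ε) :
    |f a * (b - a) - ∫ x in a..b, f x| ≤ ε * (b - a) := by
  have hconst : f a * (b - a) = ∫ _ in a..b, f a := by simp [mul_comm]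
  rw [hconst, ← intervalIntegral.integral_sub intervalIntegrable_const hf,
    ← abs_of_nonneg (sub_nonneg.2 hab)]
  exact intervalIntegral.norm_integral_le_of_norm_le_const fun x hx => (Real.norm_eq_abs _).trans_le
    (hε x (Set.uIoc_subset_uIcc.trans (Set.uIcc_of_le hab).subset hx))

lemma ContinuousOn.tendsto_sum_range_div {f : ℝ → ℝ} (hf : ContinuousOn f (Set.Icc 0 1)) :
    Tendsto (fun n : ℕ => ∑ i ∈ range n, f (i / n) / n) atTop
      (𝓝 (∫ t in (0:ℝ)..1, f t)) := by
  rw [Metric.tendsto_atTop]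
  intro ε hε
  obtain ⟨δ, hδ, hfδ⟩ := Metric.uniformContinuousOn_iff_le.1
    (isCompact_Icc.uniformContinuousOn_of_continuous hf) (ε / 2) (half_pos hε)
  obtain ⟨N, hN⟩ := exists_nat_one_div_lt hδ
  refine ⟨N + 1, fun n hn => ?_⟩
  have hn0 : (0 : ℝ) < n := by exact_mod_cast Nat.succ_le_iff.1 (le_of_add_le_right hn)
  set a : ℕ → ℝ := fun k => k / n
  have ha : ∀ k ≤ n, a k ∈ Set.Icc (0 : ℝ) 1 := fun k hk =>
    ⟨by positivity, div_le_one_of_le₀ (by exact_mod_cast hk) hn0.le⟩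
  have hstep : ∀ k, a (k + 1) - a k = 1 / n := fun k => by simp only [a]; push_cast; ring
  have hmono : ∀ k, a k ≤ a (k + 1) := fun k => sub_nonneg.1 (by rw [hstep]; positivity)
  have hsub : ∀ k < n, Set.Icc (a k) (a (k + 1)) ⊆ Set.Icc 0 1 := fun k hk =>
    Set.Icc_subset_Icc (ha k hk.le).1 (ha (k + 1) hk).2
  have hint : ∀ k < n, IntervalIntegrable f volume (a k) (a (k + 1)) := fun k hk =>
    ((hf.mono (hsub k hk)).intervalIntegrable_of_Icc (hmono k))
  have hsplit : ∫ t in (0:ℝ)..1, f t = ∑ k ∈ range n, ∫ t in a k..a (k + 1), f t := by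
    rw [intervalIntegral.sum_integral_adjacent_intervals hint]
    simp [a, hn0.ne']
  have hterm : ∀ k < n, |f (a k) * (a (k + 1) - a k) - ∫ t in a k..a (k + 1), f t|
      ≤ ε / 2 * (a (k + 1) - a k) := fun k hk =>
    abs_mul_sub_integral_le (hmono k) (hint k hk) fun x hx => by
      refine hfδ _ (ha k hk.le) _ (hsub k hk hx) ?_
      rw [Real.dist_eq, abs_sub_comm, abs_of_nonneg (sub_nonneg.2 hx.1)]
      calc x - a k ≤ a (k + 1) - a k := by linarith [hx.2]
        _ = 1 / n := hstep k
        _ ≤ 1 / (N + 1) := by gcongr; exact_mod_cast hn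
        _ ≤ δ := hN.le
  calc dist (∑ i ∈ range n, f (i / n) / n) (∫ t in (0:ℝ)..1, f t)
      = |∑ k ∈ range n, (f (a k) * (a (k + 1) - a k) - ∫ t in a k..a (k + 1), f t)| := by
        rw [Real.dist_eq, hsplit, ← sum_sub_distrib]
        simp only [hstep, a, mul_one_div]
    _ ≤ ∑ k ∈ range n, ε / 2 * (a (k + 1) - a k) :=
        (abs_sum_le_sum_abs _ _).trans (sum_le_sum fun k hk => hterm k (mem_range.1 hk))
    _ = ε / 2 := by simp only [hstep, sum_const, card_range, nsmul_eq_mul]; field_simp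
    _ < ε := half_lt_self hε

lemma abs_sum_range_div_le {f : ℕ → ℝ} {C : ℝ} (hf : ∀ i, |f i| ≤ C) (n : ℕ) :
    |∑ i ∈ range n, f i / n| ≤ C := by
  rcases n.eq_zero_or_pos with rfl | hn
  · simpa using (abs_nonneg _).trans (hf 0)
  calc |∑ i ∈ range n, f i / n| ≤ ∑ i ∈ range n, |f i| / n := by
        simpa only [abs_div, Nat.abs_cast] using
          abs_sum_le_sum_abs (fun i => f i / n) (range n)
    _ ≤ ∑ _i ∈ range n, C / n := sum_le_sum fun i _ => by gcongr; exact hf i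
    _ = C := by rw [sum_const, card_range, nsmul_eq_mul]; field_simp

section L2

variable {Ω : Type*} [MeasurableSpace Ω] {P : Measure Ω}

lemma integral_sq_sum_of_orthogonal {ι : Type*} {s : Finset ι} {f : ι → Ω → ℝ}
    (hf : ∀ i ∈ s, MemLp (f i) 2 P)
    (horth : ∀ i ∈ s, ∀ j ∈ s, i ≠ j → ∫ ω, f i ω * f j ω ∂P = 0) :
    ∫ ω, (∑ i ∈ s, f i ω) ^ 2 ∂P = ∑ i ∈ s, ∫ ω, f i ω ^ 2 ∂P := by
  have hint : ∀ i ∈ s, ∀ j ∈ s, Integrable (fun ω => f i ω * f j ω) P :=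
    fun i hi j hj => (hf i hi).integrable_mul (hf j hj)
  simp_rw [sq, sum_mul_sum]
  rw [integral_finsetSum _ fun i hi => integrable_finsetSum _ fun j hj => hint i hi j hj]
  refine sum_congr rfl fun i hi => ?_
  rw [integral_finsetSum _ fun j hj => hint i hi j hj]
  exact sum_eq_single_of_mem i hi fun j hj hji => horth i hi j hj hji.symm

lemma integral_sq_add_le {f g : Ω → ℝ} (hf : Integrable (fun ω => f ω ^ 2) P)
    (hg : Integrable (fun ω => g ω ^ 2) P) :
    ∫ ω, (f ω + g ω) ^ 2 ∂P ≤ 2 * ∫ ω, f ω ^ 2 ∂P + 2 * ∫ ω, g ω ^ 2 ∂P := by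
  rw [← integral_const_mul, ← integral_const_mul,
    ← integral_add (hf.const_mul 2) (hg.const_mul 2)]
  exact integral_mono_of_nonneg (ae_of_all _ fun ω => sq_nonneg _)
    ((hf.const_mul 2).add (hg.const_mul 2))
    (ae_of_all _ fun ω => by nlinarith [sq_nonneg (f ω - g ω)])

lemma tendsto_integral_sq_of_tendsto_ae [IsFiniteMeasure P] {F : ℕ → Ω → ℝ} {C : ℝ}
    (hF : ∀ n, AEStronglyMeasurable (F n) P) (hFC : ∀ n, ∀ᵐ ω ∂P, |F n ω| ≤ C)
    (hlim : ∀ᵐ ω ∂P, Tendsto (F · ω) atTop (𝓝 0)) :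
    Tendsto (fun n => ∫ ω, F n ω ^ 2 ∂P) atTop (𝓝 0) := by
  have h := tendsto_integral_of_dominated_convergence (fun _ => C ^ 2)
    (fun n => (hF n).pow 2) (integrable_const _)
    (fun n => (hFC n).mono fun ω hω => by
      simpa [sq_abs] using pow_le_pow_left₀ (abs_nonneg _) hω 2)
    (hlim.mono fun ω hω => by simpa using hω.pow 2)
  simpa using h

lemma tendsto_integral_sq_add_sub_of_tendsto_ae [IsFiniteMeasure P] {X F : ℕ → Ω → ℝ}
    {f : Ω → ℝ} {C : ℝ} (hX : ∀ n, Integrable (fun ω => X n ω ^ 2) P)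
    (hX0 : Tendsto (fun n => ∫ ω, X n ω ^ 2 ∂P) atTop (𝓝 0))
    (hF : ∀ n, AEStronglyMeasurable (F n) P) (hFC : ∀ n ω, |F n ω| ≤ C)
    (hFf : ∀ᵐ ω ∂P, Tendsto (F · ω) atTop (𝓝 (f ω))) :
    Tendsto (fun n => ∫ ω, (X n ω + F n ω - f ω) ^ 2 ∂P) atTop (𝓝 0) := by
  have hf : AEStronglyMeasurable f P := aestronglyMeasurable_of_tendsto_ae _ hF hFf
  have hfC : ∀ᵐ ω ∂P, |f ω| ≤ C :=
    hFf.mono fun ω hω => le_of_tendsto' hω.abs fun n => hFC n ω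
  have hFfC : ∀ n, ∀ᵐ ω ∂P, |F n ω - f ω| ≤ 2 * C := fun n =>
    hfC.mono fun ω hω => by linarith [abs_sub (F n ω) (f ω), hFC n ω]
  have hFf_sq : ∀ n, Integrable (fun ω => (F n ω - f ω) ^ 2) P := fun n =>
    (MemLp.of_bound ((hF n).sub hf) _ (hFfC n)).integrable_sq
  have hFf_L2 := tendsto_integral_sq_of_tendsto_ae (fun n => (hF n).sub hf) hFfC
    (hFf.mono fun ω hω => by simpa using hω.sub_const (f ω))
  refine squeeze_zero (fun n => integral_nonneg fun ω => sq_nonneg _) (fun n => ?_)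
    (by simpa using (hX0.const_mul 2).add (hFf_L2.const_mul 2))
  simpa only [add_sub_assoc] using integral_sq_add_le (hX n) (hFf_sq n)

end L2

lemma memLp_sq_sub_const_gaussianReal (μ : ℝ) (v : ℝ≥0) (c : ℝ) :
    MemLp (fun x => x ^ 2 - c) 2 (gaussianReal μ v) := by
  have h : MemLp id 4 (gaussianReal μ v) := by exact_mod_cast memLp_id_gaussianReal 4
  have h442 : (4 : ℝ≥0∞)⁻¹ + 4⁻¹ = 2⁻¹ := by
    rw [← two_mul, show (4 : ℝ≥0∞) = 2 * 2 by norm_num, ENNReal.mul_inv (by simp) (by simp),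
      ← mul_assoc, ENNReal.mul_inv_cancel (by simp) (by simp), one_mul]
  have hsq : MemLp (fun x : ℝ => x ^ 2) 2 (gaussianReal μ v) := by
    simpa only [sq, id] using h.mul' h (hpqr := ⟨h442⟩)
  exact hsq.sub (memLp_const c)

lemma integral_sq_sub_gaussianReal (v : ℝ≥0) : ∫ x, (x ^ 2 - v) ∂gaussianReal 0 v = 0 := by
  have hsq : ∫ x, x ^ 2 ∂gaussianReal 0 v = v := by
    simpa using (variance_eq_integral (μ := gaussianReal 0 v) measurable_id.aemeasurable).symm
  have hint : Integrable (fun x : ℝ => x ^ 2) (gaussianReal 0 v) := by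
    simpa using (memLp_sq_sub_const_gaussianReal 0 v 0).integrable one_le_two
  simp [integral_sub hint (integrable_const _), hsq]

lemma integral_sq_sub_sq_gaussianReal (v : ℝ≥0) :
    ∫ x, (x ^ 2 - v) ^ 2 ∂gaussianReal 0 v
      = v ^ 2 * ∫ z, (z ^ 2 - 1) ^ 2 ∂gaussianReal 0 1 := by
  have hmap : (gaussianReal 0 1).map ((√v : ℝ) * ·) = gaussianReal 0 v := by
    rw [gaussianReal_map_const_mul]
    congr 1
    · simp
    · ext; simp
  rw [← hmap, integral_map (by fun_prop) (by fun_prop), ← integral_const_mul]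
  congr 1 with z
  rw [mul_pow, Real.sq_sqrt v.coe_nonneg]
  ring

structure HasIndepGaussianIncrements {Ω : Type*} [MeasurableSpace Ω] (B : ℝ → Ω → ℝ)
    (P : Measure Ω) : Prop where
  measurable : ∀ t, Measurable (B t)
  map_sub : ∀ s t : ℝ, 0 ≤ s → s ≤ t → t ≤ 1 →
    P.map (fun ω => B t ω - B s ω) = gaussianReal 0 (t - s).toNNReal
  indepFun_sub : ∀ s t : ℝ, 0 ≤ s → s ≤ t → t ≤ 1 →
    IndepFun (fun ω => B t ω - B s ω) (fun ω (r : Set.Iic s) => B r ω) P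

def compensatedSqIncrement {Ω : Type*} (B : ℝ → Ω → ℝ) (s t : ℝ) (ω : Ω) : ℝ :=
  (B t ω - B s ω) ^ 2 - (t - s)

def compensatedQuadSum {Ω : Type*} (B : ℝ → Ω → ℝ) (g : ℝ → ℝ) (τ : ℕ → ℝ) (n : ℕ) (ω : Ω) :
    ℝ :=
  ∑ i ∈ range n, g (B (τ i) ω) * compensatedSqIncrement B (τ i) (τ (i + 1)) ω

namespace HasIndepGaussianIncrements

variable {Ω : Type*} [MeasurableSpace Ω] {P : Measure Ω} {B : ℝ → Ω → ℝ} {s t : ℝ}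

lemma measurable_sub (hB : HasIndepGaussianIncrements B P) :
    Measurable fun ω => B t ω - B s ω :=
  (hB.measurable t).sub (hB.measurable s)

lemma measurable_compensatedSqIncrement (hB : HasIndepGaussianIncrements B P) :
    Measurable (compensatedSqIncrement B s t) :=
  hB.measurable_sub.pow_const 2 |>.sub_const _

lemma memLp_compensatedSqIncrement (hB : HasIndepGaussianIncrements B P) (hs : 0 ≤ s)
    (hst : s ≤ t) (ht : t ≤ 1) : MemLp (compensatedSqIncrement B s t) 2 P := by
  have h := memLp_sq_sub_const_gaussianReal 0 (t - s).toNNReal (t - s)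
  rwa [← hB.map_sub s t hs hst ht, memLp_map_measure_iff (by fun_prop)
    hB.measurable_sub.aemeasurable] at h

lemma integral_compensatedSqIncrement (hB : HasIndepGaussianIncrements B P) (hs : 0 ≤ s)
    (hst : s ≤ t) (ht : t ≤ 1) : ∫ ω, compensatedSqIncrement B s t ω ∂P = 0 := by
  have h := integral_sq_sub_gaussianReal (t - s).toNNReal
  rwa [Real.coe_toNNReal _ (sub_nonneg.2 hst), ← hB.map_sub s t hs hst ht,
    integral_map hB.measurable_sub.aemeasurable (by fun_prop)] at h

lemma integral_compensatedSqIncrement_sq (hB : HasIndepGaussianIncrements B P) (hs : 0 ≤ s)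
    (hst : s ≤ t) (ht : t ≤ 1) : ∫ ω, compensatedSqIncrement B s t ω ^ 2 ∂P
      = (t - s) ^ 2 * ∫ z, (z ^ 2 - 1) ^ 2 ∂gaussianReal 0 1 := by
  have h := integral_sq_sub_sq_gaussianReal (t - s).toNNReal
  rwa [Real.coe_toNNReal _ (sub_nonneg.2 hst), ← hB.map_sub s t hs hst ht,
    integral_map hB.measurable_sub.aemeasurable (by fun_prop)] at h

lemma integral_mul_compensatedSqIncrement_eq_zero (hB : HasIndepGaussianIncrements B P)
    (hs : 0 ≤ s) (hst : s ≤ t) (ht : t ≤ 1) {Φ : (Set.Iic s → ℝ) → ℝ} (hΦ : Measurable Φ) :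
    ∫ ω, Φ (fun r : Set.Iic s => B r ω) * compensatedSqIncrement B s t ω ∂P = 0 := by
  have hpast : Measurable fun ω (r : Set.Iic s) => B r ω :=
    measurable_pi_lambda _ fun r => hB.measurable r
  have hindep := (hB.indepFun_sub s t hs hst ht).comp
    (measurable_id.pow_const 2 |>.sub_const (t - s)) hΦ
  rw [← mul_zero (∫ ω, Φ (fun r : Set.Iic s => B r ω) ∂P),
    ← hB.integral_compensatedSqIncrement hs hst ht]
  exact hindep.symm.integral_mul_eq_mul_integral (hΦ.comp hpast).aestronglyMeasurable
    hB.measurable_compensatedSqIncrement.aestronglyMeasurable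

variable {g : ℝ → ℝ} {C : ℝ}

lemma memLp_mul_compensatedSqIncrement [IsFiniteMeasure P]
    (hB : HasIndepGaussianIncrements B P) (hg : Measurable g) (hC : ∀ a, |g a| ≤ C) (u : ℝ)
    (hs : 0 ≤ s) (hst : s ≤ t) (ht : t ≤ 1) :
    MemLp (fun ω => g (B u ω) * compensatedSqIncrement B s t ω) 2 P :=
  (hB.memLp_compensatedSqIncrement hs hst ht).mul' (p := ∞)
    (.of_bound (hg.comp (hB.measurable u)).aestronglyMeasurable C (ae_of_all _ fun _ => hC _))

lemma integral_mul_compensatedSqIncrement_mul_eq_zero (hB : HasIndepGaussianIncrements B P)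
    (hg : Measurable g) {u u' : ℝ} (hu : u ≤ s) (hu' : u' ≤ s) (hs : 0 ≤ s) (hst : s ≤ t)
    (ht : t ≤ 1) :
    ∫ ω, (g (B u ω) * compensatedSqIncrement B u u' ω)
      * (g (B s ω) * compensatedSqIncrement B s t ω) ∂P = 0 := by
  let Φ : (Set.Iic s → ℝ) → ℝ := fun p =>
    g (p ⟨u, hu⟩) * ((p ⟨u', hu'⟩ - p ⟨u, hu⟩) ^ 2 - (u' - u))
      * g (p ⟨s, Set.mem_Iic.2 le_rfl⟩)
  rw [← hB.integral_mul_compensatedSqIncrement_eq_zero hs hst ht (Φ := Φ) (by fun_prop)]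
  congr 1 with ω
  simp only [compensatedSqIncrement, Φ]
  ring

variable {τ : ℕ → ℝ} {n : ℕ}

lemma memLp_compensatedQuadSum [IsFiniteMeasure P] (hB : HasIndepGaussianIncrements B P)
    (hg : Measurable g) (hC : ∀ a, |g a| ≤ C) (hτ : Monotone τ) (hτ0 : 0 ≤ τ 0)
    (hτn : τ n ≤ 1) :
    MemLp (compensatedQuadSum B g τ n) 2 P := by
  unfold compensatedQuadSum
  refine memLp_finsetSum _ fun i hi => ?_
  have hi : i + 1 ≤ n := mem_range.1 hi
  exact hB.memLp_mul_compensatedSqIncrement hg hC _ (hτ0.trans (hτ i.zero_le))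
    (hτ i.le_succ) ((hτ hi).trans hτn)

lemma integral_compensatedQuadSum_sq_le [IsProbabilityMeasure P]
    (hB : HasIndepGaussianIncrements B P) (hg : Measurable g) (hC : ∀ a, |g a| ≤ C)
    (hτ : Monotone τ) (hτ0 : 0 ≤ τ 0) (hτn : τ n ≤ 1) :
    ∫ ω, compensatedQuadSum B g τ n ω ^ 2 ∂P
      ≤ C ^ 2 * (∫ z, (z ^ 2 - 1) ^ 2 ∂gaussianReal 0 1)
        * ∑ i ∈ range n, (τ (i + 1) - τ i) ^ 2 := by
  have hτi : ∀ i ∈ range n, 0 ≤ τ i ∧ τ i ≤ τ (i + 1) ∧ τ (i + 1) ≤ 1 := fun i hi =>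
    ⟨hτ0.trans (hτ i.zero_le), hτ i.le_succ, (hτ (mem_range.1 hi)).trans hτn⟩
  have hcross : ∀ i ∈ range n, ∀ j ∈ range n, i < j →
      ∫ ω, (g (B (τ i) ω) * compensatedSqIncrement B (τ i) (τ (i + 1)) ω)
        * (g (B (τ j) ω) * compensatedSqIncrement B (τ j) (τ (j + 1)) ω) ∂P = 0 :=
    fun i _ j hj hij => hB.integral_mul_compensatedSqIncrement_mul_eq_zero hg (hτ hij.le)
      (hτ hij) (hτi j hj).1 (hτi j hj).2.1 (hτi j hj).2.2
  unfold compensatedQuadSum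
  rw [integral_sq_sum_of_orthogonal (fun i hi => hB.memLp_mul_compensatedSqIncrement hg hC _
    (hτi i hi).1 (hτi i hi).2.1 (hτi i hi).2.2), mul_sum]
  · refine sum_le_sum fun i hi => ?_
    obtain ⟨h0, h1, h2⟩ := hτi i hi
    calc ∫ ω, (g (B (τ i) ω) * compensatedSqIncrement B (τ i) (τ (i + 1)) ω) ^ 2 ∂P
        ≤ ∫ ω, C ^ 2 * compensatedSqIncrement B (τ i) (τ (i + 1)) ω ^ 2 ∂P := by
          refine integral_mono_of_nonneg (ae_of_all _ fun ω => sq_nonneg _)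
            ((hB.memLp_compensatedSqIncrement h0 h1 h2).integrable_sq.const_mul _)
            (ae_of_all _ fun ω => ?_)
          simp only [mul_pow, ← sq_abs (g _)]
          gcongr
          exact hC _
      _ = C ^ 2 * (∫ z, (z ^ 2 - 1) ^ 2 ∂gaussianReal 0 1) * (τ (i + 1) - τ i) ^ 2 := by
          rw [integral_const_mul, hB.integral_compensatedSqIncrement_sq h0 h1 h2]
          ring
  · intro i hi j hj hij
    rcases hij.lt_or_gt with h | h
    · exact hcross i hi j hj h
    · simpa only [mul_comm] using hcross j hj i hi h

lemma tendsto_integral_compensatedQuadSum_uniform_sq [IsProbabilityMeasure P]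
    (hB : HasIndepGaussianIncrements B P) (hg : Measurable g) (hC : ∀ a, |g a| ≤ C) :
    Tendsto (fun n : ℕ => ∫ ω, compensatedQuadSum B g (fun i => i / n) n ω ^ 2 ∂P)
      atTop (𝓝 0) := by
  refine squeeze_zero (fun n => integral_nonneg fun ω => sq_nonneg _) (fun n => ?_)
    (tendsto_const_div_atTop_nhds_zero_nat
      (C ^ 2 * ∫ z, (z ^ 2 - 1) ^ 2 ∂gaussianReal 0 1))
  refine (hB.integral_compensatedQuadSum_sq_le hg hC (Nat.mono_cast.div_const n.cast_nonneg)
    (by simp) (div_self_le_one _)).trans_eq ?_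
  simp only [Nat.cast_succ, add_div, add_sub_cancel_left, sum_const, card_range, nsmul_eq_mul]
  rcases n.eq_zero_or_pos with rfl | hn
  · simp
  · field_simp

end HasIndepGaussianIncrements

theorem second_order_sum_tendsto_time_integral_wiener_general
    {Ω : Type*} [MeasurableSpace Ω] (P : Measure Ω) [IsProbabilityMeasure P]
    (B : ℝ → Ω → ℝ)
    (hmeas : ∀ t, Measurable (B t))
    (hgauss : ∀ s t : ℝ, 0 ≤ s → s ≤ t → t ≤ 1 →
      Measure.map (fun ω => B t ω - B s ω) P = gaussianReal 0 (Real.toNNReal (t - s)))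
    (hindep : ∀ s t : ℝ, 0 ≤ s → s ≤ t → t ≤ 1 →
      IndepFun (fun ω => B t ω - B s ω) (fun ω => fun r : Set.Iic s => B r ω) P)
    (hcont : ∀ᵐ ω ∂P, ContinuousOn (fun t => B t ω) (Set.Icc 0 1))
    (g : ℝ → ℝ)
    (hgb : ∃ C, ∀ a, |g a| ≤ C)
    (hglip : ∃ K : ℝ, ∀ a b : ℝ, |g a - g b| ≤ K * |a - b|) :
    Tendsto (fun n : ℕ => ∫ ω,
      ((∑ i ∈ Finset.range n,
          g (B ((i : ℝ) / n) ω) * (B (((i : ℝ) + 1) / n) ω - B ((i : ℝ) / n) ω) ^ 2)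
        - ∫ t in (0:ℝ)..1, g (B t ω)) ^ 2 ∂P)
      atTop (nhds 0) := by
  obtain ⟨C, hC⟩ := hgb
  obtain ⟨K, hK⟩ := hglip
  have hg : Continuous g := (LipschitzWith.of_dist_le' hK).continuous
  have hB : HasIndepGaussianIncrements B P := ⟨hmeas, hgauss, hindep⟩
  have hQ : ∀ n : ℕ, Integrable (fun ω => compensatedQuadSum B g (fun i => i / n) n ω ^ 2) P :=
    fun n => (hB.memLp_compensatedQuadSum hg.measurable hC
      (Nat.mono_cast.div_const n.cast_nonneg) (by simp) (div_self_le_one _)).integrable_sq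
  have hR : ∀ n : ℕ, Measurable fun ω => ∑ i ∈ range n, g (B (i / n) ω) / n := fun n =>
    Finset.measurable_sum _ fun i _ => (hg.measurable.comp (hmeas _)).div_const _
  have hRI : ∀ᵐ ω ∂P, Tendsto (fun n : ℕ => ∑ i ∈ range n, g (B (i / n) ω) / n) atTop
      (𝓝 (∫ t in (0:ℝ)..1, g (B t ω))) :=
    hcont.mono fun ω hω => (hg.comp_continuousOn hω).tendsto_sum_range_div
  refine (tendsto_integral_sq_add_sub_of_tendsto_ae hQ
    (hB.tendsto_integral_compensatedQuadSum_uniform_sq hg.measurable hC)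
    (fun n => (hR n).aestronglyMeasurable)
    (fun n ω => abs_sum_range_div_le (fun i => hC (B (i / n) ω)) n) hRI).congr fun n => ?_
  refine integral_congr_ae (ae_of_all _ fun ω => congrArg (· ^ 2) ?_)
  simp only [compensatedQuadSum, compensatedSqIncrement, Nat.cast_succ, ← sum_add_distrib]
  exact congrArg (· - _) (sum_congr rfl fun i _ => by ring)

/-- Second-order terms along Brownian paths contribute a time integral: for a standard
Brownian motion `B` on `[0,1]` and a bounded Lipschitz `g`, the sums
`∑ g(B_{t_i})(B_{t_{i+1}} − B_{t_i})²` along the uniform partition `t_i = i/n` converge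
in `L²(P)` to `∫_0^1 g(B_t) dt`. -/
theorem second_order_sum_tendsto_time_integral_wiener
    {Ω : Type*} [MeasurableSpace Ω] (P : Measure Ω) [IsProbabilityMeasure P]
    (B : ℝ → Ω → ℝ)
    (hmeas : ∀ t, Measurable (B t))
    (hzero : ∀ᵐ ω ∂P, B 0 ω = 0)
    (hgauss : ∀ s t : ℝ, 0 ≤ s → s ≤ t → t ≤ 1 →
      Measure.map (fun ω => B t ω - B s ω) P = gaussianReal 0 (Real.toNNReal (t - s)))
    (hindep : ∀ s t : ℝ, 0 ≤ s → s ≤ t → t ≤ 1 →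
      IndepFun (fun ω => B t ω - B s ω) (fun ω => fun r : Set.Iic s => B r ω) P)
    (hcont : ∀ᵐ ω ∂P, ContinuousOn (fun t => B t ω) (Set.Icc 0 1))
    (g : ℝ → ℝ)
    (hgb : ∃ C, ∀ a, |g a| ≤ C)
    (hglip : ∃ K : ℝ, ∀ a b : ℝ, |g a - g b| ≤ K * |a - b|) :
    Tendsto (fun n : ℕ => ∫ ω,
      ((∑ i ∈ Finset.range n,
          g (B ((i : ℝ) / n) ω) * (B (((i : ℝ) + 1) / n) ω - B ((i : ℝ) / n) ω) ^ 2)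
        - ∫ t in (0:ℝ)..1, g (B t ω)) ^ 2 ∂P)
      atTop (nhds 0) :=
  second_order_sum_tendsto_time_integral_wiener_general P B hmeas hgauss hindep hcont g hgb hglip
end

section
/- Fix ℏ > 0 and define, for Ψ ∈ L¹(ℝ²; ℂ), the real quadratic form Q(Ψ) = ∫_{ℝ²×ℝ²} conj(Ψ(p_1,q_1)) Ψ(p_0,q_0) e^{(i/2ℏ)(p_0 q_1 − q_0 p_1)} dp_0 dq_0 dp_1 dq_1. Then there exists Ψ ∈ L¹(ℝ²; ℂ) with Q(Ψ) < 0. -/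
/-!
The kernel defines the operator `T f (a) = ∫ f y · e^{(i/2ℏ)(a₁y₂ − a₂y₁)} dy`, a rescaled
symplectic Fourier transform, and Fubini gives `Q(Ψ) = ∫ Ψ · T (conj Ψ)`. In one variable the
Gaussian `G x = e^{-x²/(4ℏ)}` is mapped by `x ↦ e^{isx/(2ℏ)}` to `√(4πℏ) G s`, and `x G x` to
`i s √(4πℏ) G s` (integration by parts). Hence `conj Ψ = (p + iq) G p G q` satisfies
`T (conj Ψ) = -4πℏ conj Ψ`, so `Q(Ψ) = -4πℏ ‖Ψ‖₂² < 0` for `Ψ = (p − iq) G p G q`.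
-/

open MeasureTheory

/-- The path-integral squared norm (quadratic form) on the prequantum state space of
`T*ℝ ≅ ℝ²`:
`Q(Ψ) = ∫ conj(Ψ(p₁,q₁)) Ψ(p₀,q₀) e^{(i/2ℏ)(p₀q₁ − q₀p₁)} dp₀ dq₀ dp₁ dq₁`. -/
noncomputable def pathIntegralNormSq (ℏ : ℝ) (Ψ : ℝ × ℝ → ℂ) : ℂ :=
  ∫ z : (ℝ × ℝ) × (ℝ × ℝ),
    (starRingEnd ℂ) (Ψ z.2) * Ψ z.1 *
      Complex.exp (Complex.I *
        (((z.1.1 * z.2.2 - z.1.2 * z.2.1) / (2 * ℏ) : ℝ) : ℂ))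

open Complex Real ComplexConjugate

section GaussianMoment

variable {b : ℂ}

lemma integrable_cexp_neg_mul_sq_add_I_mul (hb : 0 < b.re) (t : ℝ) :
    Integrable fun x : ℝ => cexp (-b * x ^ 2 + I * t * x) := by
  simpa using integrable_cexp_quadratic hb (I * t) 0

lemma integrable_mul_cexp_neg_mul_sq_add_I_mul (hb : 0 < b.re) (t : ℝ) :
    Integrable fun x : ℝ => x * cexp (-b * x ^ 2 + I * t * x) := by
  refine (integrable_mul_cexp_neg_mul_sq hb).congr' (by fun_prop) (.of_forall fun x => ?_)
  simp [Complex.norm_exp]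

lemma hasDerivAt_cexp_neg_mul_sq_add_I_mul (b : ℂ) (t x : ℝ) :
    HasDerivAt (fun x : ℝ => cexp (-b * x ^ 2 + I * t * x))
      ((-2 * b * x + I * t) * cexp (-b * x ^ 2 + I * t * x)) x := by
  have h : HasDerivAt (fun w : ℂ => -b * w ^ 2 + I * t * w) (-2 * b * x + I * t) x :=
    (((hasDerivAt_pow 2 (x : ℂ)).const_mul (-b)).add
      ((hasDerivAt_id (x : ℂ)).const_mul (I * t))).congr_deriv (by ring)
  exact h.comp_ofReal.cexp.congr_deriv (mul_comm _ _)

lemma integral_mul_cexp_neg_mul_sq_add_I_mul (hb : 0 < b.re) (t : ℝ) :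
    ∫ x : ℝ, x * cexp (-b * x ^ 2 + I * t * x) =
      I * t / (2 * b) * ∫ x : ℝ, cexp (-b * x ^ 2 + I * t * x) := by
  have hb0 : b ≠ 0 := by rintro rfl; simp at hb
  have hmoment := integrable_mul_cexp_neg_mul_sq_add_I_mul hb t
  have hgauss := integrable_cexp_neg_mul_sq_add_I_mul hb t
  have hsplit : (fun x : ℝ => (-2 * b * x + I * t) * cexp (-b * x ^ 2 + I * t * x)) =
      fun x : ℝ => -2 * b * (x * cexp (-b * x ^ 2 + I * t * x)) +
        I * t * cexp (-b * x ^ 2 + I * t * x) := by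
    ext x; ring
  have hzero := integral_eq_zero_of_hasDerivAt_of_integrable
    (hasDerivAt_cexp_neg_mul_sq_add_I_mul b t)
    (hsplit ▸ (hmoment.const_mul _).add (hgauss.const_mul _)) hgauss
  rw [hsplit, integral_add (hmoment.const_mul _) (hgauss.const_mul _), integral_const_mul,
    integral_const_mul] at hzero
  rw [div_mul_eq_mul_div, eq_div_iff (mul_ne_zero two_ne_zero hb0)]
  linear_combination -hzero

end GaussianMoment

lemma integral_fst_add_I_mul_snd_mul_mul {f g : ℝ → ℂ} (hf : Integrable f) (hg : Integrable g)
    (hxf : Integrable fun x : ℝ => x * f x) (hxg : Integrable fun x : ℝ => x * g x) :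
    ∫ z : ℝ × ℝ, (z.1 + I * z.2) * f z.1 * g z.2 =
      (∫ x, x * f x) * (∫ x, g x) + I * ((∫ x, f x) * ∫ x, x * g x) := by
  have hsplit : (fun z : ℝ × ℝ => (z.1 + I * z.2) * f z.1 * g z.2) =
      fun z => z.1 * f z.1 * g z.2 + I * (f z.1 * (z.2 * g z.2)) := by
    ext z; ring
  rw [hsplit, Measure.volume_eq_prod,
    integral_add (hxf.mul_prod hg) ((hf.mul_prod hxg).const_mul I), integral_const_mul,
    integral_prod_mul (fun x : ℝ => (x : ℂ) * f x) g,
    integral_prod_mul f fun x : ℝ => (x : ℂ) * g x]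

noncomputable def pathIntegralKernel (ℏ : ℝ) (a y : ℝ × ℝ) : ℂ :=
  cexp (I * (((a.1 * y.2 - a.2 * y.1) / (2 * ℏ) : ℝ) : ℂ))

lemma pathIntegralKernel_eq_mul (ℏ : ℝ) (a y : ℝ × ℝ) :
    pathIntegralKernel ℏ a y =
      cexp (I * ↑(-a.2 / (2 * ℏ)) * y.1) * cexp (I * ↑(a.1 / (2 * ℏ)) * y.2) := by
  rw [pathIntegralKernel, ← Complex.exp_add]
  push_cast
  ring_nf

section PathIntegralNormSq

variable {Ψ : ℝ × ℝ → ℂ}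

lemma pathIntegralNormSq_eq_integral_kernel (ℏ : ℝ) :
    pathIntegralNormSq ℏ Ψ =
      ∫ z : (ℝ × ℝ) × (ℝ × ℝ), conj (Ψ z.2) * Ψ z.1 * pathIntegralKernel ℏ z.1 z.2 :=
  rfl

lemma integrable_conj_mul_mul_pathIntegralKernel (ℏ : ℝ) (hΨ : Integrable Ψ) :
    Integrable (fun z : (ℝ × ℝ) × (ℝ × ℝ) => conj (Ψ z.2) * Ψ z.1 * pathIntegralKernel ℏ z.1 z.2)
      (volume.prod volume) := by
  refine (hΨ.norm.mul_prod hΨ.norm).mono' ?_ (.of_forall fun z => ?_)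
  · exact ((continuous_conj.comp_aestronglyMeasurable hΨ.1.comp_snd).mul hΨ.1.comp_fst).mul
      (by unfold pathIntegralKernel; fun_prop : Continuous _).aestronglyMeasurable
  · rw [pathIntegralKernel, norm_mul, norm_mul, norm_exp_I_mul_ofReal, RCLike.norm_conj, mul_one,
      mul_comm]

lemma pathIntegralNormSq_eq_integral_mul_integral (ℏ : ℝ) (hΨ : Integrable Ψ) :
    pathIntegralNormSq ℏ Ψ = ∫ a, Ψ a * ∫ y, conj (Ψ y) * pathIntegralKernel ℏ a y := by
  rw [pathIntegralNormSq_eq_integral_kernel, Measure.volume_eq_prod,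
    integral_prod _ (integrable_conj_mul_mul_pathIntegralKernel ℏ hΨ)]
  congr with a
  rw [← integral_const_mul]
  congr with y
  ring

lemma pathIntegralNormSq_eq_mul_integral_normSq {ℏ : ℝ} (hΨ : Integrable Ψ) {c : ℂ}
    (hc : ∀ a, ∫ y, conj (Ψ y) * pathIntegralKernel ℏ a y = c * conj (Ψ a)) :
    pathIntegralNormSq ℏ Ψ = c * ((∫ a, normSq (Ψ a) : ℝ) : ℂ) := by
  rw [pathIntegralNormSq_eq_integral_mul_integral ℏ hΨ, ← integral_complex_ofReal,
    ← integral_const_mul]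
  congr with a
  rw [hc, mul_left_comm, mul_conj]

end PathIntegralNormSq

noncomputable def selfDualGaussian (ℏ x : ℝ) : ℂ := cexp (-((4 * ℏ)⁻¹ : ℝ) * x ^ 2)

lemma conj_selfDualGaussian (ℏ x : ℝ) : conj (selfDualGaussian ℏ x) = selfDualGaussian ℏ x := by
  rw [selfDualGaussian, ← exp_conj, map_mul, map_neg, map_pow, conj_ofReal, conj_ofReal]

lemma normSq_selfDualGaussian (ℏ x : ℝ) :
    normSq (selfDualGaussian ℏ x) = Real.exp (-(2 * ℏ)⁻¹ * x ^ 2) := by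
  rw [normSq_eq_norm_sq, selfDualGaussian, norm_exp, ← Real.exp_nat_mul]
  congr 1
  simp only [← ofReal_pow, ← ofReal_neg, ← ofReal_mul, ofReal_re]
  field_simp
  ring

lemma selfDualGaussian_neg (ℏ x : ℝ) : selfDualGaussian ℏ (-x) = selfDualGaussian ℏ x := by
  simp [selfDualGaussian]

section SelfDualGaussian

variable {ℏ : ℝ}

lemma selfDualGaussian_mul_cexp_I_mul (t x : ℝ) :
    selfDualGaussian ℏ x * cexp (I * t * x) = cexp (-((4 * ℏ)⁻¹ : ℝ) * x ^ 2 + I * t * x) :=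
  (Complex.exp_add _ _).symm

lemma re_inv_four_mul_pos (hℏ : 0 < ℏ) : 0 < (((4 * ℏ)⁻¹ : ℝ) : ℂ).re := by
  rw [ofReal_re]; positivity

lemma integrable_selfDualGaussian_mul_cexp_I_mul (hℏ : 0 < ℏ) (t : ℝ) :
    Integrable fun x : ℝ => selfDualGaussian ℏ x * cexp (I * t * x) := by
  simpa only [selfDualGaussian_mul_cexp_I_mul] using
    integrable_cexp_neg_mul_sq_add_I_mul (re_inv_four_mul_pos hℏ) t

lemma integrable_mul_selfDualGaussian_mul_cexp_I_mul (hℏ : 0 < ℏ) (t : ℝ) :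
    Integrable fun x : ℝ => x * (selfDualGaussian ℏ x * cexp (I * t * x)) := by
  simpa only [selfDualGaussian_mul_cexp_I_mul] using
    integrable_mul_cexp_neg_mul_sq_add_I_mul (re_inv_four_mul_pos hℏ) t

lemma integral_selfDualGaussian_mul_cexp_I_mul (hℏ : 0 < ℏ) (s : ℝ) :
    ∫ x : ℝ, selfDualGaussian ℏ x * cexp (I * ↑(s / (2 * ℏ)) * x) =
      (4 * π * ℏ : ℂ) ^ (1 / 2 : ℂ) * selfDualGaussian ℏ s := by
  have hℏ0 : (ℏ : ℂ) ≠ 0 := ofReal_ne_zero.mpr hℏ.ne'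
  simp_rw [selfDualGaussian, mul_comm (cexp (-_ * _))]
  rw [fourierIntegral_gaussian (re_inv_four_mul_pos hℏ)]
  push_cast
  congr 2
  · field_simp
  · field_simp
    ring

lemma integral_mul_selfDualGaussian_mul_cexp_I_mul (hℏ : 0 < ℏ) (s : ℝ) :
    ∫ x : ℝ, x * (selfDualGaussian ℏ x * cexp (I * ↑(s / (2 * ℏ)) * x)) =
      I * s * ((4 * π * ℏ : ℂ) ^ (1 / 2 : ℂ) * selfDualGaussian ℏ s) := by
  have hℏ0 : (ℏ : ℂ) ≠ 0 := ofReal_ne_zero.mpr hℏ.ne'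
  simp_rw [selfDualGaussian_mul_cexp_I_mul]
  rw [integral_mul_cexp_neg_mul_sq_add_I_mul (re_inv_four_mul_pos hℏ)]
  simp_rw [← selfDualGaussian_mul_cexp_I_mul]
  rw [integral_selfDualGaussian_mul_cexp_I_mul hℏ]
  congr 1
  push_cast
  field_simp
  ring

end SelfDualGaussian

noncomputable def negativeNormState (ℏ : ℝ) (z : ℝ × ℝ) : ℂ :=
  (z.1 - I * z.2) * selfDualGaussian ℏ z.1 * selfDualGaussian ℏ z.2

lemma conj_negativeNormState (ℏ : ℝ) (z : ℝ × ℝ) :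
    conj (negativeNormState ℏ z) =
      (z.1 + I * z.2) * selfDualGaussian ℏ z.1 * selfDualGaussian ℏ z.2 := by
  simp [negativeNormState, conj_selfDualGaussian]

lemma continuous_negativeNormState (ℏ : ℝ) : Continuous (negativeNormState ℏ) := by
  unfold negativeNormState selfDualGaussian
  fun_prop

section NegativeNormState

variable {ℏ : ℝ}

lemma integrable_negativeNormState (hℏ : 0 < ℏ) : Integrable (negativeNormState ℏ) := by
  have hg : Integrable (selfDualGaussian ℏ) :=
    integrable_cexp_neg_mul_sq (re_inv_four_mul_pos hℏ)
  have hxg : Integrable fun x : ℝ => x * selfDualGaussian ℏ x :=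
    integrable_mul_cexp_neg_mul_sq (re_inv_four_mul_pos hℏ)
  rw [Measure.volume_eq_prod]
  refine ((hxg.mul_prod hg).sub ((hg.mul_prod hxg).const_mul I)).congr (.of_forall fun z => ?_)
  simp only [Pi.sub_apply, negativeNormState]
  ring

lemma integrable_normSq_negativeNormState (hℏ : 0 < ℏ) :
    Integrable fun z => normSq (negativeNormState ℏ z) := by
  have hc : 0 < (2 * ℏ)⁻¹ := by positivity
  have hg := integrable_exp_neg_mul_sq hc
  have hx2g : Integrable fun x : ℝ => x ^ 2 * Real.exp (-(2 * ℏ)⁻¹ * x ^ 2) := by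
    simpa using integrable_rpow_mul_exp_neg_mul_sq hc (s := 2) (by norm_num)
  rw [Measure.volume_eq_prod]
  refine ((hx2g.mul_prod hg).add (hg.mul_prod hx2g)).congr (.of_forall fun z => ?_)
  have hlin : normSq (z.1 - I * z.2) = z.1 ^ 2 + z.2 ^ 2 := by
    simpa [sub_eq_add_neg, mul_comm I] using normSq_add_mul_I z.1 (-z.2)
  simp only [Pi.add_apply, negativeNormState, normSq_mul, normSq_selfDualGaussian, hlin]
  ring

lemma integral_pos_normSq_negativeNormState (hℏ : 0 < ℏ) :
    0 < ∫ z, normSq (negativeNormState ℏ z) :=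
  integral_pos_of_integrable_nonneg_nonzero (x := (1, 0))
    (continuous_normSq.comp (continuous_negativeNormState ℏ))
    (integrable_normSq_negativeNormState hℏ) (fun _ => normSq_nonneg _)
    (by simp [negativeNormState, selfDualGaussian])

lemma integral_conj_negativeNormState_mul_pathIntegralKernel (hℏ : 0 < ℏ) (a : ℝ × ℝ) :
    ∫ y, conj (negativeNormState ℏ y) * pathIntegralKernel ℏ a y =
      -(4 * π * ℏ) * conj (negativeNormState ℏ a) := by
  have hsplit : ∀ y : ℝ × ℝ, conj (negativeNormState ℏ y) * pathIntegralKernel ℏ a y =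
      (y.1 + I * y.2) * (selfDualGaussian ℏ y.1 * cexp (I * ↑(-a.2 / (2 * ℏ)) * y.1)) *
        (selfDualGaussian ℏ y.2 * cexp (I * ↑(a.1 / (2 * ℏ)) * y.2)) := by
    intro y
    rw [conj_negativeNormState, pathIntegralKernel_eq_mul]
    ring
  have hK : ((4 * π * ℏ : ℂ) ^ (1 / 2 : ℂ)) ^ 2 = 4 * π * ℏ := by
    rw [one_div, cpow_ofNat_inv_pow]
  rw [integral_congr_ae (.of_forall hsplit), integral_fst_add_I_mul_snd_mul_mul
    (integrable_selfDualGaussian_mul_cexp_I_mul hℏ _)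
    (integrable_selfDualGaussian_mul_cexp_I_mul hℏ _)
    (integrable_mul_selfDualGaussian_mul_cexp_I_mul hℏ _)
    (integrable_mul_selfDualGaussian_mul_cexp_I_mul hℏ _),
    integral_mul_selfDualGaussian_mul_cexp_I_mul hℏ, integral_selfDualGaussian_mul_cexp_I_mul hℏ,
    integral_mul_selfDualGaussian_mul_cexp_I_mul hℏ, integral_selfDualGaussian_mul_cexp_I_mul hℏ,
    conj_negativeNormState, selfDualGaussian_neg]
  push_cast
  linear_combination (-(a.1 + I * a.2) * selfDualGaussian ℏ a.1 * selfDualGaussian ℏ a.2) * hK +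
    (((4 * π * ℏ : ℂ) ^ (1 / 2 : ℂ)) ^ 2 * selfDualGaussian ℏ a.1 * selfDualGaussian ℏ a.2 * a.1) *
      I_sq

end NegativeNormState

/-- The prequantum state space contains states of negative norm: there is an integrable
`Ψ` with `Q(Ψ) < 0` (a negative real number). -/
theorem exists_state_of_negative_norm (ℏ : ℝ) (hℏ : 0 < ℏ) :
    ∃ Ψ : ℝ × ℝ → ℂ, Integrable Ψ ∧
      ∃ r : ℝ, r < 0 ∧ pathIntegralNormSq ℏ Ψ = (r : ℂ) := by
  refine ⟨negativeNormState ℏ, integrable_negativeNormState hℏ,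
    -(4 * π * ℏ) * ∫ z, normSq (negativeNormState ℏ z), ?_, ?_⟩
  · exact mul_neg_of_neg_of_pos (neg_lt_zero.mpr (by positivity))
      (integral_pos_normSq_negativeNormState hℏ)
  · rw [pathIntegralNormSq_eq_mul_integral_normSq (integrable_negativeNormState hℏ)
      (integral_conj_negativeNormState_mul_pathIntegralKernel hℏ)]
    push_cast
    ring
end
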